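/- (Warp theorem) Let E be a triple vector bundle equipped with a grid consisting of three linear double sections (X_{2,3}; X_2, X_3; X), (Y_{1,3}; Y_1, Y_3; Y), (Z_{1,2}; Z_1, Z_2; Z). Then the three ultrawarps, sections of the ultracore bundle E_{123} → M obtained as the warps of the grids induced on the three core double vector bundles E_{23,1}, E_{13,2}, E_{12,3} (with the stated orientation conventions), satisfy uwarp_BF + uwarp_LR + uwarp_UD = 0. -/

import Mathlib

/-! Algebraic model of (double) vector bundles.

A `PreVB E B` is a vector bundle structure on `E` over the base `B`, recorded
through its structure maps (projection, fibrewise addition, scalar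
multiplication by reals, zero section and fibrewise negation) together with
the usual axioms, all stated for elements lying in a common fibre. -/

structure PreVB (E : Type*) (B : Type*) where
  π : E → B
  add : E → E → E
  smul : ℝ → E → E
  neg : E → E
  zero : B → E
  π_zero : ∀ b, π (zero b) = b
  π_add : ∀ e e', π e = π e' → π (add e e') = π e
  π_smul : ∀ t e, π (smul t e) = π e
  π_neg : ∀ e, π (neg e) = π e
  add_zero : ∀ e, add e (zero (π e)) = e
  zero_add : ∀ e, add (zero (π e)) e = e
  add_comm : ∀ e e', π e = π e' → add e e' = add e' e
  add_assoc : ∀ e₁ e₂ e₃, π e₁ = π e₂ → π e₂ = π e₃ →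
    add (add e₁ e₂) e₃ = add e₁ (add e₂ e₃)
  add_neg : ∀ e, add e (neg e) = zero (π e)
  one_smul : ∀ e, smul 1 e = e
  smul_zero : ∀ t b, smul t (zero b) = zero b
  smul_add : ∀ t e e', π e = π e' → smul t (add e e') = add (smul t e) (smul t e')
  add_smul : ∀ t s e, smul (t + s) e = add (smul t e) (smul s e)
  mul_smul : ∀ t s e, smul (t * s) e = smul t (smul s e)

/-- Fibrewise subtraction. -/
def PreVB.sub {E B : Type*} (V : PreVB E B) (e e' : E) : E := V.add e (V.neg e')

/-- An (algebraic model of a) double vector bundle `(D; A, B; M)`: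
two vector bundle structures on `D`, over the vector bundles `A → M` and
`B → M`, which commute in the categorical sense: each structure map of either
structure on `D` is a morphism of vector bundles with respect to the other
structure.  The field `core_exists` records that the core acts freely and
transitively on the fibres of `D → A ×_M B` (it follows, for genuine double
vector bundles, from `D → A ×_M B` being a surjective submersion). -/
structure DVB (D : Type*) (A : Type*) (B : Type*) (M : Type*) where
  bA : PreVB A M
  bB : PreVB B M
  vA : PreVB D A
  vB : PreVB D B
  proj_compat : ∀ d, bA.π (vA.π d) = bB.π (vB.π d)
  πB_addA : ∀ d d', vA.π d = vA.π d' → vB.π (vA.add d d') = bB.add (vB.π d) (vB.π d')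
  πA_addB : ∀ d d', vB.π d = vB.π d' → vA.π (vB.add d d') = bA.add (vA.π d) (vA.π d')
  πB_smulA : ∀ t d, vB.π (vA.smul t d) = bB.smul t (vB.π d)
  πA_smulB : ∀ t d, vA.π (vB.smul t d) = bA.smul t (vA.π d)
  πB_negA : ∀ d, vB.π (vA.neg d) = bB.neg (vB.π d)
  πA_negB : ∀ d, vA.π (vB.neg d) = bA.neg (vA.π d)
  πB_zeroA : ∀ a, vB.π (vA.zero a) = bB.zero (bA.π a)
  πA_zeroB : ∀ b, vA.π (vB.zero b) = bA.zero (bB.π b)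
  zeroA_add : ∀ a a', bA.π a = bA.π a' →
    vA.zero (bA.add a a') = vB.add (vA.zero a) (vA.zero a')
  zeroB_add : ∀ b b', bB.π b = bB.π b' →
    vB.zero (bB.add b b') = vA.add (vB.zero b) (vB.zero b')
  zeroA_smul : ∀ t a, vA.zero (bA.smul t a) = vB.smul t (vA.zero a)
  zeroB_smul : ∀ t b, vB.zero (bB.smul t b) = vA.smul t (vB.zero b)
  double_zero : ∀ m, vA.zero (bA.zero m) = vB.zero (bB.zero m)
  interchange : ∀ d₁ d₂ d₃ d₄,
    vA.π d₁ = vA.π d₂ → vA.π d₃ = vA.π d₄ →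
    vB.π d₁ = vB.π d₃ → vB.π d₂ = vB.π d₄ →
    vB.add (vA.add d₁ d₂) (vA.add d₃ d₄) = vA.add (vB.add d₁ d₃) (vB.add d₂ d₄)
  smulA_addB : ∀ t d d', vB.π d = vB.π d' →
    vA.smul t (vB.add d d') = vB.add (vA.smul t d) (vA.smul t d')
  smulB_addA : ∀ t d d', vA.π d = vA.π d' →
    vB.smul t (vA.add d d') = vA.add (vB.smul t d) (vB.smul t d')
  smul_smul : ∀ t s d, vA.smul t (vB.smul s d) = vB.smul s (vA.smul t d)
  core_exists : ∀ d d', vA.π d = vA.π d' → vB.π d = vB.π d' →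
    ∃! c : D, (vA.π c = bA.zero (bA.π (vA.π d)) ∧ vB.π c = bB.zero (bA.π (vA.π d))) ∧
      d = vA.add d' (vB.add c (vA.zero (vA.π d)))

/-- `d` is an element of the core of the double vector bundle, sitting over `m ∈ M`. -/
def DVB.CoreAt {D A B M : Type*} (V : DVB D A B M) (m : M) (d : D) : Prop :=
  V.vA.π d = V.bA.zero m ∧ V.vB.π d = V.bB.zero m

/-- A linear section `(ξ, X)` of the double vector bundle: `ξ : B → D` is a
section of `D → B` which is a morphism of vector bundles over `X : M → A`. -/
structure LinSecB {D A B M : Type*} (V : DVB D A B M) where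
  ξ : B → D
  X : M → A
  secX : ∀ m, V.bA.π (X m) = m
  proj : ∀ b, V.vB.π (ξ b) = b
  isOver : ∀ b, V.vA.π (ξ b) = X (V.bB.π b)
  map_add : ∀ b b', V.bB.π b = V.bB.π b' →
    ξ (V.bB.add b b') = V.vA.add (ξ b) (ξ b')
  map_smul : ∀ t b, ξ (V.bB.smul t b) = V.vA.smul t (ξ b)

/-- A linear section `(η, Y)` of the other structure: `η : A → D` is a section
of `D → A` which is a morphism of vector bundles over `Y : M → B`. -/
structure LinSecA {D A B M : Type*} (V : DVB D A B M) where
  η : A → D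
  Y : M → B
  secY : ∀ m, V.bB.π (Y m) = m
  proj : ∀ a, V.vA.π (η a) = a
  isOver : ∀ a, V.vB.π (η a) = Y (V.bA.π a)
  map_add : ∀ a a', V.bA.π a = V.bA.π a' →
    η (V.bA.add a a') = V.vB.add (η a) (η a')
  map_smul : ∀ t a, η (V.bA.smul t a) = V.vB.smul t (η a)

/-- `w : M → D` is (the core-valued function underlying) the warp of the grid
`((ξ, X), (η, Y))`:  pointwise it is a core element and satisfies
`ξ(Y(m)) -_A η(X(m)) = w(m) +_B 0̃_{X(m)}` and
`ξ(Y(m)) -_B η(X(m)) = w(m) +_A 0̃_{Y(m)}`. -/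
def DVB.IsWarp {D A B M : Type*} (V : DVB D A B M)
    (s : LinSecB V) (r : LinSecA V) (w : M → D) : Prop :=
  ∀ m : M, V.CoreAt m (w m) ∧
    V.vA.sub (s.ξ (r.Y m)) (r.η (s.X m)) = V.vB.add (w m) (V.vA.zero (s.X m)) ∧
    V.vB.sub (s.ξ (r.Y m)) (r.η (s.X m)) = V.vA.add (w m) (V.vB.zero (r.Y m))

/-! Algebraic model of triple vector bundles.

A triple vector bundle is a cube of vector bundle structures whose six faces
are double vector bundles; the structures shared between adjacent faces
coincide.  We record the six faces (with the intended identifications: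
`up : (E; E₁₃, E₂₃; E₃)`, `back : (E; E₁₂, E₁₃; E₁)`, `left : (E; E₁₂, E₂₃; E₂)`,
`down : (E₁₂; E₁, E₂; M)`, `right : (E₁₃; E₁, E₃; M)`, `front : (E₂₃; E₂, E₃; M)`)
together with the coherence conditions saying that the same bundle structure
is used whenever two faces share an edge, and that the iterated zero sections
over `E₁`, `E₂`, `E₃` agree. -/
structure TVB (E E12 E13 E23 E1 E2 E3 M : Type*) where
  up : DVB E E13 E23 E3
  back : DVB E E12 E13 E1
  left : DVB E E12 E23 E2
  down : DVB E12 E1 E2 M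
  right : DVB E13 E1 E3 M
  front : DVB E23 E2 E3 M
  coh_E_E12 : back.vA = left.vA
  coh_E_E13 : up.vA = back.vB
  coh_E_E23 : up.vB = left.vB
  coh_E12_E1 : back.bA = down.vA
  coh_E12_E2 : left.bA = down.vB
  coh_E13_E1 : back.bB = right.vA
  coh_E13_E3 : up.bA = right.vB
  coh_E23_E2 : left.bB = front.vA
  coh_E23_E3 : up.bB = front.vB
  coh_E1_M : down.bA = right.bA
  coh_E2_M : down.bB = front.bA
  coh_E3_M : right.bB = front.bB
  zero_coh_E1 : ∀ e1 : E1, back.vA.zero (down.vA.zero e1) = up.vA.zero (right.vA.zero e1)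
  zero_coh_E2 : ∀ e2 : E2, back.vA.zero (down.vB.zero e2) = up.vB.zero (front.vA.zero e2)
  zero_coh_E3 : ∀ e3 : E3, up.vA.zero (right.vB.zero e3) = up.vB.zero (front.vB.zero e3)

namespace TVB

variable {E E12 E13 E23 E1 E2 E3 M : Type*}

/-- The double zero `0̂_{e₁}` of `E` over `e₁ ∈ E₁`. -/
def zE1 (T : TVB E E12 E13 E23 E1 E2 E3 M) (e1 : E1) : E :=
  T.back.vA.zero (T.down.vA.zero e1)

/-- The double zero `0̂_{e₂}` of `E` over `e₂ ∈ E₂`. -/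
def zE2 (T : TVB E E12 E13 E23 E1 E2 E3 M) (e2 : E2) : E :=
  T.back.vA.zero (T.down.vB.zero e2)

/-- The double zero `0̂_{e₃}` of `E` over `e₃ ∈ E₃`. -/
def zE3 (T : TVB E E12 E13 E23 E1 E2 E3 M) (e3 : E3) : E :=
  T.up.vA.zero (T.right.vB.zero e3)

/-- The triple zero `⊙³_m` of `E` over `m ∈ M`. -/
def tripleZero (T : TVB E E12 E13 E23 E1 E2 E3 M) (m : M) : E :=
  T.up.vB.zero (T.front.vA.zero (T.front.bA.zero m))

/-- `e` belongs to the ultracore of `E`, over `m ∈ M`: all three projections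
of `e` are (double) zeros. -/
def UltracoreAt (T : TVB E E12 E13 E23 E1 E2 E3 M) (m : M) (e : E) : Prop :=
  T.back.vA.π e = T.down.vA.zero (T.down.bA.zero m) ∧
  T.up.vA.π e = T.right.vA.zero (T.right.bA.zero m) ∧
  T.up.vB.π e = T.front.vA.zero (T.front.bA.zero m)

end TVB

/-- A down-up linear double section `(Z_{1,2}; Z_1, Z_2; Z)` of a triple vector
bundle: a morphism of double vector bundles from the Down face to the Up
face. -/
structure DULinSec {E E12 E13 E23 E1 E2 E3 M : Type*}
    (T : TVB E E12 E13 E23 E1 E2 E3 M) where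
  z12 : E12 → E
  z1 : E1 → E13
  z2 : E2 → E23
  z : M → E3
  sec12 : ∀ p, T.back.vA.π (z12 p) = p
  over13 : ∀ p, T.up.vA.π (z12 p) = z1 (T.down.vA.π p)
  over23 : ∀ p, T.up.vB.π (z12 p) = z2 (T.down.vB.π p)
  sec1 : ∀ p, T.right.vA.π (z1 p) = p
  over1 : ∀ p, T.right.vB.π (z1 p) = z (T.right.bA.π p)
  sec2 : ∀ p, T.front.vA.π (z2 p) = p
  over2 : ∀ p, T.front.vB.π (z2 p) = z (T.front.bA.π p)
  secz : ∀ m, T.right.bB.π (z m) = m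
  map_add1 : ∀ p q, T.down.vA.π p = T.down.vA.π q →
    z12 (T.down.vA.add p q) = T.up.vA.add (z12 p) (z12 q)
  map_add2 : ∀ p q, T.down.vB.π p = T.down.vB.π q →
    z12 (T.down.vB.add p q) = T.up.vB.add (z12 p) (z12 q)
  map_smul1 : ∀ t p, z12 (T.down.vA.smul t p) = T.up.vA.smul t (z12 p)
  map_smul2 : ∀ t p, z12 (T.down.vB.smul t p) = T.up.vB.smul t (z12 p)
  z1_add : ∀ p q, T.right.bA.π p = T.right.bA.π q →
    z1 (T.right.bA.add p q) = T.right.vB.add (z1 p) (z1 q)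
  z1_smul : ∀ t p, z1 (T.right.bA.smul t p) = T.right.vB.smul t (z1 p)
  z2_add : ∀ p q, T.front.bA.π p = T.front.bA.π q →
    z2 (T.front.bA.add p q) = T.front.vB.add (z2 p) (z2 q)
  z2_smul : ∀ t p, z2 (T.front.bA.smul t p) = T.front.vB.smul t (z2 p)

/-- A front-back linear double section `(X_{2,3}; X_2, X_3; X)`. -/
structure FBLinSec {E E12 E13 E23 E1 E2 E3 M : Type*}
    (T : TVB E E12 E13 E23 E1 E2 E3 M) where
  x23 : E23 → E
  x2 : E2 → E12
  x3 : E3 → E13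
  x : M → E1
  sec23 : ∀ p, T.up.vB.π (x23 p) = p
  over12 : ∀ p, T.back.vA.π (x23 p) = x2 (T.front.vA.π p)
  over13 : ∀ p, T.up.vA.π (x23 p) = x3 (T.front.vB.π p)
  sec2 : ∀ p, T.down.vB.π (x2 p) = p
  over2 : ∀ p, T.down.vA.π (x2 p) = x (T.down.bB.π p)
  sec3 : ∀ p, T.right.vB.π (x3 p) = p
  over3 : ∀ p, T.right.vA.π (x3 p) = x (T.right.bB.π p)
  secx : ∀ m, T.down.bA.π (x m) = m
  map_add2 : ∀ p q, T.front.vA.π p = T.front.vA.π q →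
    x23 (T.front.vA.add p q) = T.back.vA.add (x23 p) (x23 q)
  map_add3 : ∀ p q, T.front.vB.π p = T.front.vB.π q →
    x23 (T.front.vB.add p q) = T.up.vA.add (x23 p) (x23 q)
  map_smul2 : ∀ t p, x23 (T.front.vA.smul t p) = T.back.vA.smul t (x23 p)
  map_smul3 : ∀ t p, x23 (T.front.vB.smul t p) = T.up.vA.smul t (x23 p)
  x2_add : ∀ p q, T.down.bB.π p = T.down.bB.π q →
    x2 (T.down.bB.add p q) = T.down.vA.add (x2 p) (x2 q)
  x2_smul : ∀ t p, x2 (T.down.bB.smul t p) = T.down.vA.smul t (x2 p)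
  x3_add : ∀ p q, T.right.bB.π p = T.right.bB.π q →
    x3 (T.right.bB.add p q) = T.right.vA.add (x3 p) (x3 q)
  x3_smul : ∀ t p, x3 (T.right.bB.smul t p) = T.right.vA.smul t (x3 p)

/-- A right-left linear double section `(Y_{1,3}; Y_1, Y_3; Y)`. -/
structure RLLinSec {E E12 E13 E23 E1 E2 E3 M : Type*}
    (T : TVB E E12 E13 E23 E1 E2 E3 M) where
  y13 : E13 → E
  y1 : E1 → E12
  y3 : E3 → E23
  y : M → E2
  sec13 : ∀ p, T.up.vA.π (y13 p) = p
  over12 : ∀ p, T.back.vA.π (y13 p) = y1 (T.right.vA.π p)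
  over23 : ∀ p, T.up.vB.π (y13 p) = y3 (T.right.vB.π p)
  sec1 : ∀ p, T.down.vA.π (y1 p) = p
  over1 : ∀ p, T.down.vB.π (y1 p) = y (T.down.bA.π p)
  sec3 : ∀ p, T.front.vB.π (y3 p) = p
  over3 : ∀ p, T.front.vA.π (y3 p) = y (T.front.bB.π p)
  secy : ∀ m, T.down.bB.π (y m) = m
  map_add1 : ∀ p q, T.right.vA.π p = T.right.vA.π q →
    y13 (T.right.vA.add p q) = T.back.vA.add (y13 p) (y13 q)
  map_add3 : ∀ p q, T.right.vB.π p = T.right.vB.π q →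
    y13 (T.right.vB.add p q) = T.up.vB.add (y13 p) (y13 q)
  map_smul1 : ∀ t p, y13 (T.right.vA.smul t p) = T.back.vA.smul t (y13 p)
  map_smul3 : ∀ t p, y13 (T.right.vB.smul t p) = T.up.vB.smul t (y13 p)
  y1_add : ∀ p q, T.down.bA.π p = T.down.bA.π q →
    y1 (T.down.bA.add p q) = T.down.vB.add (y1 p) (y1 q)
  y1_smul : ∀ t p, y1 (T.down.bA.smul t p) = T.down.vB.smul t (y1 p)
  y3_add : ∀ p q, T.front.bB.π p = T.front.bB.π q →
    y3 (T.front.bB.add p q) = T.front.vA.add (y3 p) (y3 q)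
  y3_smul : ∀ t p, y3 (T.front.bB.smul t p) = T.front.vA.smul t (y3 p)


/-!
Evaluate the three linear double sections at a point `m` in the two possible orders. This gives
six elements `P₁ = Y₁₃ Z₁ X`, `P₂ = Z₁₂ Y₁ X`, `P₃ = X₂₃ Z₂ Y`, `P₄ = Z₁₂ X₂ Y`, `P₅ = Y₁₃ X₃ Z`,
`P₆ = X₂₃ Y₃ Z` of `E`, forming a hexagon in which adjacent vertices have the same projections
to two of `E₁₂, E₁₃, E₂₃`. The six face warps are the differences along its edges (the Up, Back
and Left warps directly, the Down, Right and Front ones after applying `Z₁₂, Y₁₃, X₂₃`).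
Computing `P₅ -₁₂ P₂` once through `P₁` and once through `P₆, P₄` (the interchange law of the
Back face) gives an identity between second differences of warps. Expressing these second
differences through the three ultrawarps turns it into an equation in the fibre of `E → E₂₃`
over the double zero, an abelian group, where it reads `u₁ + u₂ + u₃ = 0`.
-/

namespace PreVB

variable {E B : Type*} (V : PreVB E B)

/-- Fibrewise identities are proved in this abelian group, by `abel`. -/
abbrev Fiber (b : B) : Type _ := {e : E // V.π e = b}

variable {V} {b : B}

instance : Add (V.Fiber b) :=
  ⟨fun x y => ⟨V.add x.1 y.1, by rw [V.π_add _ _ (x.2.trans y.2.symm), x.2]⟩⟩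

instance : Zero (V.Fiber b) := ⟨⟨V.zero b, V.π_zero b⟩⟩

instance : Neg (V.Fiber b) := ⟨fun x => ⟨V.neg x.1, by rw [V.π_neg, x.2]⟩⟩

instance : AddCommGroup (V.Fiber b) where
  add_assoc x y z := Subtype.ext (V.add_assoc _ _ _ (x.2.trans y.2.symm) (y.2.trans z.2.symm))
  zero_add x := Subtype.ext (by have h := V.zero_add x.1; rw [x.2] at h; exact h)
  add_zero x := Subtype.ext (by have h := V.add_zero x.1; rw [x.2] at h; exact h)
  add_comm x y := Subtype.ext (V.add_comm _ _ (x.2.trans y.2.symm))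
  neg_add_cancel x := Subtype.ext (show V.add (V.neg x.1) x.1 = V.zero b by
    rw [V.add_comm _ _ (V.π_neg x.1), V.add_neg, x.2])
  nsmul := nsmulRec
  zsmul := zsmulRec

variable (V)

lemma π_sub {a a' : E} (h : V.π a = V.π a') : V.π (V.sub a a') = V.π a :=
  V.π_add _ _ (by rw [V.π_neg, h])

lemma sub_self (e : E) : V.sub e e = V.zero (V.π e) := V.add_neg e

lemma zero_smul (e : E) : V.smul 0 e = V.zero (V.π e) := by
  let s : V.Fiber (V.π e) := ⟨V.smul 0 e, V.π_smul 0 e⟩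
  have h : s + s = s := Subtype.ext (show V.add (V.smul 0 e) (V.smul 0 e) = V.smul 0 e by
    rw [← V.add_smul, _root_.add_zero])
  exact congrArg Subtype.val ((add_eq_left (M := V.Fiber (V.π e))).mp h)

lemma neg_eq_smul (e : E) : V.neg e = V.smul (-1) e := by
  let x : V.Fiber (V.π e) := ⟨e, rfl⟩
  let y : V.Fiber (V.π e) := ⟨V.smul (-1) e, V.π_smul _ e⟩
  have h : x + y = 0 := Subtype.ext (show V.add e (V.smul (-1) e) = V.zero (V.π e) by
    conv_lhs => arg 2; rw [← V.one_smul e]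
    rw [← V.one_smul e, ← V.add_smul, add_neg_cancel, V.zero_smul])
  exact congrArg Subtype.val (neg_eq_of_add_eq_zero_right h)

lemma neg_zero (b : B) : V.neg (V.zero b) = V.zero b := by
  rw [V.neg_eq_smul, V.smul_zero]

lemma add_zero_of_π_eq {e : E} {b : B} (h : V.π e = b) : V.add e (V.zero b) = e := by
  rw [← h, V.add_zero]

lemma sub_zero_of_π_eq {e : E} {b : B} (h : V.π e = b) : V.sub e (V.zero b) = e := by
  rw [PreVB.sub, neg_zero, add_zero_of_π_eq _ h]

lemma add_right_cancel {x y k : E} (hx : V.π x = V.π k) (hy : V.π y = V.π k)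
    (h : V.add x k = V.add y k) : x = y :=
  congrArg Subtype.val (_root_.add_right_cancel (b := (⟨k, rfl⟩ : V.Fiber (V.π k)))
    (a := ⟨x, hx⟩) (c := ⟨y, hy⟩) (Subtype.ext h))

lemma sub_sub_sub_cancel_right {p q r : E} (hp : V.π p = V.π r) (hq : V.π q = V.π r) :
    V.sub (V.sub p r) (V.sub q r) = V.sub p q :=
  congrArg Subtype.val (_root_.sub_sub_sub_cancel_right
    (⟨p, hp⟩ : V.Fiber (V.π r)) ⟨q, hq⟩ ⟨r, rfl⟩)

lemma sub_sub_sub_cancel_left {p q r : E} (hp : V.π p = V.π r) (hq : V.π q = V.π r) :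
    V.sub (V.sub r p) (V.sub r q) = V.sub q p :=
  congrArg Subtype.val (_root_.sub_sub_sub_cancel_left
    (⟨p, hp⟩ : V.Fiber (V.π r)) ⟨q, hq⟩ ⟨r, rfl⟩)

section Maps

variable {α β γ δ : Type*} {V : PreVB α γ} {W : PreVB β δ} {f : α → β}

lemma map_zero (hsmul : ∀ t p, f (V.smul t p) = W.smul t (f p)) (p : α) :
    f (V.zero (V.π p)) = W.zero (W.π (f p)) := by
  rw [← V.zero_smul, hsmul, W.zero_smul]

lemma map_sub (hadd : ∀ p q, V.π p = V.π q → f (V.add p q) = W.add (f p) (f q))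
    (hsmul : ∀ t p, f (V.smul t p) = W.smul t (f p)) {p q : α} (h : V.π p = V.π q) :
    f (V.sub p q) = W.sub (f p) (f q) := by
  rw [PreVB.sub, hadd _ _ (by rwa [V.π_neg]), V.neg_eq_smul, hsmul, ← W.neg_eq_smul, PreVB.sub]

lemma map_warp {ε ζ : Type*} {V' : PreVB α ε} {W' : PreVB β ζ}
    (hadd : ∀ p q, V.π p = V.π q → f (V.add p q) = W.add (f p) (f q))
    (hsmul : ∀ t p, f (V.smul t p) = W.smul t (f p))
    (hadd' : ∀ p q, V'.π p = V'.π q → f (V'.add p q) = W'.add (f p) (f q))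
    {d d' w : α} (hd : V.π d = V.π d') (hw : V'.π (V.zero (V.π d')) = V'.π w)
    (h : V.sub d d' = V'.add (V.zero (V.π d')) w) :
    W.sub (f d) (f d') = W'.add (W.zero (W.π (f d'))) (f w) := by
  rw [← map_sub hadd hsmul hd, h, hadd' _ _ hw, map_zero hsmul]

end Maps

end PreVB

namespace DVB

variable {D A B M : Type*} (V : DVB D A B M)

lemma πA_subB {d d' : D} (h : V.vB.π d = V.vB.π d') :
    V.vA.π (V.vB.sub d d') = V.bA.sub (V.vA.π d) (V.vA.π d') := by
  rw [PreVB.sub, V.πA_addB _ _ (by rwa [V.vB.π_neg]), V.πA_negB, PreVB.sub]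

lemma πB_subA {d d' : D} (h : V.vA.π d = V.vA.π d') :
    V.vB.π (V.vA.sub d d') = V.bB.sub (V.vB.π d) (V.vB.π d') := by
  rw [PreVB.sub, V.πB_addA _ _ (by rwa [V.vA.π_neg]), V.πB_negA, PreVB.sub]

lemma vB_π_doubleZero (m : M) : V.vB.π (V.vA.zero (V.bA.zero m)) = V.bB.zero m := by
  rw [V.double_zero, V.vB.π_zero]

lemma negA_addB {d d' : D} (h : V.vB.π d = V.vB.π d') :
    V.vA.neg (V.vB.add d d') = V.vB.add (V.vA.neg d) (V.vA.neg d') := by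
  simp only [V.vA.neg_eq_smul, V.smulA_addB _ _ _ h]

lemma negB_addA {d d' : D} (h : V.vA.π d = V.vA.π d') :
    V.vB.neg (V.vA.add d d') = V.vA.add (V.vB.neg d) (V.vB.neg d') := by
  simp only [V.vB.neg_eq_smul, V.smulB_addA _ _ _ h]

lemma zeroA_sub {a a' : A} (h : V.bA.π a = V.bA.π a') :
    V.vA.zero (V.bA.sub a a') = V.vB.sub (V.vA.zero a) (V.vA.zero a') := by
  rw [PreVB.sub, V.zeroA_add _ _ (by rwa [V.bA.π_neg]), V.bA.neg_eq_smul, V.zeroA_smul,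
    ← V.vB.neg_eq_smul, PreVB.sub]

lemma zeroB_sub {b b' : B} (h : V.bB.π b = V.bB.π b') :
    V.vB.zero (V.bB.sub b b') = V.vA.sub (V.vB.zero b) (V.vB.zero b') := by
  rw [PreVB.sub, V.zeroB_add _ _ (by rwa [V.bB.π_neg]), V.bB.neg_eq_smul, V.zeroB_smul,
    ← V.vA.neg_eq_smul, PreVB.sub]

lemma subA_addB {d₁ d₂ d₃ d₄ : D}
    (h₁₂ : V.vB.π d₁ = V.vB.π d₂) (h₃₄ : V.vB.π d₃ = V.vB.π d₄)
    (h₁₃ : V.vA.π d₁ = V.vA.π d₃) (h₂₄ : V.vA.π d₂ = V.vA.π d₄) :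
    V.vA.sub (V.vB.add d₁ d₂) (V.vB.add d₃ d₄) =
      V.vB.add (V.vA.sub d₁ d₃) (V.vA.sub d₂ d₄) := by
  rw [PreVB.sub, V.negA_addB h₃₄]
  exact (V.interchange _ _ _ _ (by rwa [V.vA.π_neg]) (by rwa [V.vA.π_neg]) h₁₂
    (by rw [V.πB_negA, V.πB_negA, h₃₄])).symm

/-- The interchange law in difference form, for a square `d₁ d₂ / d₃ d₄` whose rows share their
`A`-projections and whose columns share their `B`-projections. -/
lemma subA_eq_addB_subA {d₁ d₂ d₃ d₄ : D}
    (h₁₂ : V.vA.π d₁ = V.vA.π d₂) (h₃₄ : V.vA.π d₃ = V.vA.π d₄)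
    (h₁₃ : V.vB.π d₁ = V.vB.π d₃) (h₂₄ : V.vB.π d₂ = V.vB.π d₄) :
    V.vA.sub d₁ d₂ =
      V.vB.add (V.vA.sub (V.vB.sub d₁ d₃) (V.vB.sub d₂ d₄)) (V.vA.sub d₃ d₄) := by
  have cancel : ∀ d d' : D, V.vB.π d = V.vB.π d' → V.vB.add (V.vB.sub d d') d' = d :=
    fun d d' h => congrArg Subtype.val
      (sub_add_cancel (⟨d, h⟩ : V.vB.Fiber (V.vB.π d')) ⟨d', rfl⟩)
  conv_lhs => rw [← cancel d₁ d₃ h₁₃, ← cancel d₂ d₄ h₂₄]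
  refine V.subA_addB (V.vB.π_sub h₁₃ |>.trans h₁₃) (V.vB.π_sub h₂₄ |>.trans h₂₄) ?_ h₃₄
  rw [V.πA_subB h₁₃, V.πA_subB h₂₄, h₁₂, h₃₄]

variable {V}

lemma coreAdd_eq {m : M} {c c' : D} (hc : V.CoreAt m c) (hc' : V.CoreAt m c') :
    V.vA.add c c' = V.vB.add c c' := by
  set z := V.vA.zero (V.bA.zero m)
  have zA : ∀ {d}, V.vA.π d = V.bA.zero m → z = V.vA.zero (V.vA.π d) := fun h => by rw [h]
  have zB : ∀ {d}, V.vB.π d = V.bB.zero m → z = V.vB.zero (V.vB.π d) := fun h => by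
    rw [h]; exact V.double_zero m
  have key := V.interchange c z z c' (hc.1.trans (V.vA.π_zero (V.bA.zero m)).symm)
    ((V.vA.π_zero (V.bA.zero m)).trans hc'.1.symm) (hc.2.trans (V.vB_π_doubleZero m).symm)
    ((V.vB_π_doubleZero m).trans hc'.2.symm)
  rwa [zA hc.1, V.vA.add_zero, ← zA hc.1, zA hc'.1, V.vA.zero_add, ← zA hc'.1, zB hc.2,
    V.vB.add_zero, ← zB hc.2, zB hc'.2, V.vB.zero_add, eq_comm] at key

lemma core_sub {m : M} {c c' : D} (hc : V.CoreAt m c) (hc' : V.CoreAt m c') :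
    V.vA.sub c c' = V.vB.sub c c' := by
  have hn : V.CoreAt m (V.vA.neg c') :=
    ⟨by rw [V.vA.π_neg, hc'.1], by rw [V.πB_negA, hc'.2, V.bB.neg_zero]⟩
  have hneg : V.vA.neg c' = V.vB.neg c' := by
    let x : V.vB.Fiber (V.bB.zero m) := ⟨c', hc'.2⟩
    let y : V.vB.Fiber (V.bB.zero m) := ⟨V.vA.neg c', hn.2⟩
    have h : x + y = 0 := Subtype.ext (show V.vB.add c' (V.vA.neg c') = V.vB.zero (V.bB.zero m) by
      rw [← coreAdd_eq hc' hn, V.vA.add_neg, hc'.1, V.double_zero])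
    exact congrArg Subtype.val (neg_eq_of_add_eq_zero_right h).symm
  rw [PreVB.sub, coreAdd_eq hc hn, hneg, PreVB.sub]

/-- `d +_A (0̃ +_B c)` is the action of the core element `c` on `d`; over a zero of `B` it is
plain `B`-addition. -/
lemma addA_zeroA_addB {m : M} {d c : D} (hd : V.vB.π d = V.bB.zero m) (hc : V.CoreAt m c) :
    V.vA.add d (V.vB.add (V.vA.zero (V.vA.π d)) c) = V.vB.add d c := by
  have hzB : V.vB.π (V.vA.zero (V.vA.π d)) = V.bB.zero m := by
    rw [V.πB_zeroA, V.proj_compat, hd, V.bB.π_zero]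
  have key := V.interchange d (V.vA.zero (V.vA.π d)) (V.vA.zero (V.bA.zero m)) c
    (V.vA.π_zero _).symm ((V.vA.π_zero (V.bA.zero m)).trans hc.1.symm)
    (hd.trans (V.vB_π_doubleZero m).symm) (hzB.trans hc.2.symm)
  rw [V.vA.add_zero, V.double_zero, ← hd, V.vB.add_zero, hd, ← V.double_zero, ← hc.1,
    V.vA.zero_add] at key
  exact key.symm

/-- The warp relation read through `B`-differences can be read through `A`-differences. -/
lemma subA_eq_of_subB_eq {m : M} {d d' c : D} (hA : V.vA.π d = V.vA.π d')
    (hB : V.vB.π d = V.vB.π d') (hm : V.bB.π (V.vB.π d) = m) (hc : V.CoreAt m c)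
    (h : V.vB.sub d d' = V.vA.add (V.vB.zero (V.vB.π d)) c) :
    V.vA.sub d d' = V.vB.add (V.vA.zero (V.vA.π d)) c := by
  have hzA : V.vA.π (V.vB.zero (V.vB.π d)) = V.bA.zero m := by rw [V.πA_zeroB, hm]
  have hzB : V.vB.π (V.vA.zero (V.vA.π d)) = V.bB.zero m := by
    rw [V.πB_zeroA, V.proj_compat, hm]
  have cancel : V.vA.sub (V.vA.add (V.vB.zero (V.vB.π d)) c) (V.vB.zero (V.vB.π d)) = c :=
    congrArg Subtype.val (add_sub_cancel_left
      (⟨V.vB.zero (V.vB.π d), hzA⟩ : V.vA.Fiber (V.bA.zero m)) ⟨c, hc.1⟩)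
  rw [V.subA_eq_addB_subA hA rfl hB rfl, V.vB.sub_self, ← hB, h, cancel, V.vA.sub_self, ← hA,
    V.vB.add_comm _ _ (hc.2.trans hzB.symm)]

lemma πA_eq_of_subB_eq {d d' c : D} {b : B} (hB : V.vB.π d = V.vB.π d')
    (hc : V.vA.π c = V.vA.π (V.vB.zero b)) (h : V.vB.sub d d' = V.vA.add (V.vB.zero b) c) :
    V.vA.π d = V.vA.π d' := by
  have hp : V.bA.π (V.vA.π d) = V.bA.π (V.vA.π d') := by rw [V.proj_compat, V.proj_compat, hB]
  have h' := congrArg V.vA.π h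
  rw [V.πA_subB hB, V.vA.π_add _ _ hc.symm, V.πA_zeroB] at h'
  have hb : V.bB.π b = V.bA.π (V.vA.π d') := by rw [← hp, ← V.bA.π_sub hp, h', V.bA.π_zero]
  rw [hb] at h'
  exact congrArg Subtype.val (sub_eq_zero.mp
    (Subtype.ext h' : (⟨_, hp⟩ : V.bA.Fiber (V.bA.π (V.vA.π d'))) - ⟨_, rfl⟩ = 0))

end DVB

attribute [simp] PreVB.π_zero PreVB.π_neg PreVB.π_add PreVB.π_sub
  PreVB.neg_zero PreVB.add_zero_of_π_eq PreVB.sub_zero_of_π_eq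
  DVB.πA_addB DVB.πA_negB DVB.πB_zeroA DVB.πA_zeroB

attribute [simp] FBLinSec.over12 FBLinSec.over13 FBLinSec.sec2 FBLinSec.over2
  FBLinSec.sec3 FBLinSec.over3 FBLinSec.secx RLLinSec.sec13 RLLinSec.over12 RLLinSec.over23
  RLLinSec.sec1 RLLinSec.over1 RLLinSec.sec3 RLLinSec.over3 RLLinSec.secy DULinSec.sec12
  DULinSec.over13 DULinSec.over23 DULinSec.sec1 DULinSec.over1 DULinSec.sec2 DULinSec.over2
  DULinSec.secz

namespace TVB

variable {E E12 E13 E23 E1 E2 E3 M : Type*}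

/-! The structure maps shared by several faces are normalised to those of `T.back.vA`
(`E → E₁₂`), `T.up.vA` (`E → E₁₃`), `T.up.vB` (`E → E₂₃`), `T.down`, `T.right.vA`, `T.right.vB`,
`T.front.vA`, `T.front.vB` and `T.right.bB`; the projection lemmas are stated in these terms, so
that `simp` computes the three side projections of the elements of `E` met below. -/

section Canonical

variable (T : TVB E E12 E13 E23 E1 E2 E3 M)

@[simp] lemma left_vA : T.left.vA = T.back.vA := T.coh_E_E12.symm
@[simp] lemma back_vB : T.back.vB = T.up.vA := T.coh_E_E13.symm
@[simp] lemma left_vB : T.left.vB = T.up.vB := T.coh_E_E23.symm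
@[simp] lemma back_bA : T.back.bA = T.down.vA := T.coh_E12_E1
@[simp] lemma left_bA : T.left.bA = T.down.vB := T.coh_E12_E2
@[simp] lemma back_bB : T.back.bB = T.right.vA := T.coh_E13_E1
@[simp] lemma up_bA : T.up.bA = T.right.vB := T.coh_E13_E3
@[simp] lemma left_bB : T.left.bB = T.front.vA := T.coh_E23_E2
@[simp] lemma up_bB : T.up.bB = T.front.vB := T.coh_E23_E3
@[simp] lemma right_bA : T.right.bA = T.down.bA := T.coh_E1_M.symm
@[simp] lemma front_bA : T.front.bA = T.down.bB := T.coh_E2_M.symm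
@[simp] lemma front_bB : T.front.bB = T.right.bB := T.coh_E3_M.symm

lemma right_doubleZero (m : M) :
    T.right.vA.zero (T.down.bA.zero m) = T.right.vB.zero (T.right.bB.zero m) := by
  simpa using T.right.double_zero m

lemma front_doubleZero (m : M) :
    T.front.vA.zero (T.down.bB.zero m) = T.front.vB.zero (T.right.bB.zero m) := by
  simpa using T.front.double_zero m

end Canonical

variable {T : TVB E E12 E13 E23 E1 E2 E3 M}

@[simp] lemma π12_add13 {d d' : E} (h : T.up.vA.π d = T.up.vA.π d') :
    T.back.vA.π (T.up.vA.add d d') = T.down.vA.add (T.back.vA.π d) (T.back.vA.π d') := by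
  simpa using T.back.πA_addB d d' (by simpa using h)

@[simp] lemma π12_add23 {d d' : E} (h : T.up.vB.π d = T.up.vB.π d') :
    T.back.vA.π (T.up.vB.add d d') = T.down.vB.add (T.back.vA.π d) (T.back.vA.π d') := by
  simpa using T.left.πA_addB d d' (by simpa using h)

@[simp] lemma π13_sub12 {d d' : E} (h : T.back.vA.π d = T.back.vA.π d') :
    T.up.vA.π (T.back.vA.sub d d') = T.right.vA.sub (T.up.vA.π d) (T.up.vA.π d') := by
  simpa using T.back.πB_subA h

@[simp] lemma π12_sub13 {d d' : E} (h : T.up.vA.π d = T.up.vA.π d') :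
    T.back.vA.π (T.up.vA.sub d d') = T.down.vA.sub (T.back.vA.π d) (T.back.vA.π d') := by
  simpa using T.back.πA_subB (by simpa using h)

@[simp] lemma π12_neg23 (d : E) :
    T.back.vA.π (T.up.vB.neg d) = T.down.vB.neg (T.back.vA.π d) := by
  simpa using T.left.πA_negB d

@[simp] lemma π13_zero12 (a : E12) :
    T.up.vA.π (T.back.vA.zero a) = T.right.vA.zero (T.down.vA.π a) := by
  simpa using T.back.πB_zeroA a

@[simp] lemma π12_zero13 (b : E13) :
    T.back.vA.π (T.up.vA.zero b) = T.down.vA.zero (T.right.vA.π b) := by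
  simpa using T.back.πA_zeroB b

@[simp] lemma π23_zero12 (a : E12) :
    T.up.vB.π (T.back.vA.zero a) = T.front.vA.zero (T.down.vB.π a) := by
  simpa using T.left.πB_zeroA a

@[simp] lemma π12_zero23 (c : E23) :
    T.back.vA.π (T.up.vB.zero c) = T.down.vB.zero (T.front.vA.π c) := by
  simpa using T.left.πA_zeroB c

end TVB

section LinearSections

variable {E E12 E13 E23 E1 E2 E3 M : Type*} {T : TVB E E12 E13 E23 E1 E2 E3 M}

@[simp] lemma FBLinSec.x2_zero (XS : FBLinSec T) (m : M) :
    XS.x2 (T.down.bB.zero m) = T.down.vA.zero (XS.x m) := by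
  simpa using PreVB.map_zero XS.x2_smul (T.down.bB.zero m)

@[simp] lemma FBLinSec.x3_zero (XS : FBLinSec T) (m : M) :
    XS.x3 (T.right.bB.zero m) = T.right.vA.zero (XS.x m) := by
  simpa using PreVB.map_zero XS.x3_smul (T.right.bB.zero m)

@[simp] lemma RLLinSec.y1_zero (YS : RLLinSec T) (m : M) :
    YS.y1 (T.down.bA.zero m) = T.down.vB.zero (YS.y m) := by
  simpa using PreVB.map_zero YS.y1_smul (T.down.bA.zero m)

@[simp] lemma RLLinSec.y3_zero (YS : RLLinSec T) (m : M) :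
    YS.y3 (T.right.bB.zero m) = T.front.vA.zero (YS.y m) := by
  simpa using PreVB.map_zero YS.y3_smul (T.front.bB.zero m)

@[simp] lemma DULinSec.z1_zero (ZS : DULinSec T) (m : M) :
    ZS.z1 (T.down.bA.zero m) = T.right.vB.zero (ZS.z m) := by
  simpa using PreVB.map_zero ZS.z1_smul (T.right.bA.zero m)

@[simp] lemma DULinSec.z2_zero (ZS : DULinSec T) (m : M) :
    ZS.z2 (T.down.bB.zero m) = T.front.vB.zero (ZS.z m) := by
  simpa using PreVB.map_zero ZS.z2_smul (T.front.bA.zero m)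

end LinearSections

namespace TVB

variable {E E12 E13 E23 E1 E2 E3 M : Type*} {T : TVB E E12 E13 E23 E1 E2 E3 M}

lemma sub13_add13_zero12 {a a' : E12} {w w' : E} (ha : T.down.vA.π a = T.down.vA.π a')
    (hw : T.up.vA.π w = T.right.vA.zero (T.down.vA.π a))
    (hw' : T.up.vA.π w' = T.right.vA.zero (T.down.vA.π a)) :
    T.up.vA.sub (T.up.vA.add (T.back.vA.zero a) w) (T.up.vA.add (T.back.vA.zero a') w') =
      T.up.vA.add (T.back.vA.zero (T.down.vA.sub a a')) (T.up.vA.sub w w') := by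
  have hz := T.back.zeroA_sub (a := a) (a' := a') (by simpa using ha)
  simp only [back_bA, back_vB] at hz
  rw [hz]
  exact congrArg Subtype.val (add_sub_add_comm
    (⟨T.back.vA.zero a, by simp⟩ : T.up.vA.Fiber (T.right.vA.zero (T.down.vA.π a)))
    ⟨w, hw⟩ ⟨T.back.vA.zero a', by simp [ha]⟩ ⟨w', hw'⟩)

lemma sub13_add23_zero12 {a a' : E12} {w w' : E} (ha : T.down.vA.π a = T.down.vA.π a')
    (hw : T.up.vB.π w = T.front.vA.zero (T.down.vB.π a))
    (hw' : T.up.vB.π w' = T.front.vA.zero (T.down.vB.π a'))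
    (hww' : T.up.vA.π w = T.up.vA.π w') :
    T.up.vA.sub (T.up.vB.add (T.back.vA.zero a) w) (T.up.vB.add (T.back.vA.zero a') w') =
      T.up.vB.add (T.back.vA.zero (T.down.vA.sub a a')) (T.up.vA.sub w w') := by
  have hz := T.back.zeroA_sub (a := a) (a' := a') (by simpa using ha)
  simp only [back_bA, back_vB] at hz
  rw [hz]
  exact T.up.subA_addB (by simp [hw]) (by simp [hw']) (by simp [ha]) hww'

lemma sub12_add23_zero13 {b b' : E13} {w w' : E} (hb : T.right.vA.π b = T.right.vA.π b')
    (hw : T.up.vB.π w = T.front.vB.zero (T.right.vB.π b))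
    (hw' : T.up.vB.π w' = T.front.vB.zero (T.right.vB.π b'))
    (hww' : T.back.vA.π w = T.back.vA.π w') :
    T.back.vA.sub (T.up.vB.add (T.up.vA.zero b) w) (T.up.vB.add (T.up.vA.zero b') w') =
      T.up.vB.add (T.up.vA.zero (T.right.vA.sub b b')) (T.back.vA.sub w w') := by
  have hz := T.back.zeroB_sub (b := b) (b' := b') (by simpa using hb)
  simp only [back_bB, back_vB] at hz
  rw [hz]
  simpa using T.left.subA_addB (d₁ := T.up.vA.zero b) (d₂ := w) (d₃ := T.up.vA.zero b')
    (d₄ := w') (by simp [hw]) (by simp [hw']) (by simp [hb]) (by simpa using hww')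

lemma sub12_add23_add13_zero12 {m : M} {a : E12} {v u : E}
    (ha : T.down.vB.π a = T.down.bB.zero m) (hv : T.left.CoreAt (T.down.bB.zero m) v)
    (hu : T.UltracoreAt m u) :
    T.back.vA.sub (T.up.vB.add (T.back.vA.zero a) v)
        (T.up.vA.add (T.back.vA.zero a) (T.up.vB.add (T.zE1 (T.down.vA.π a)) u)) =
      T.up.vB.add (T.back.vA.zero a) (T.up.vB.sub v u) := by
  obtain ⟨hu₁₂, hu₁₃, hu₂₃⟩ := hu
  simp only [right_bA, front_bA, right_doubleZero, front_doubleZero] at hu₁₃ hu₂₃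
  have hu' : T.left.CoreAt (T.down.bB.zero m) u :=
    ⟨by simpa [T.down.double_zero] using hu₁₂, by simpa [front_doubleZero] using hu₂₃⟩
  have act := T.up.addA_zeroA_addB (m := T.right.bB.zero m) (d := T.back.vA.zero a) (c := u)
    (by simp [ha, front_doubleZero]) ⟨by simpa using hu₁₃, by simpa using hu₂₃⟩
  have shift := T.left.subA_addB (d₁ := T.back.vA.zero a) (d₂ := v) (d₃ := T.back.vA.zero a)
    (d₄ := u) (by simpa [ha] using hv.2.symm) (by simpa [ha, front_doubleZero] using hu₂₃.symm)
    rfl (hv.1.trans hu'.1.symm)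
  rw [zE1, T.zero_coh_E1]
  simp only [π13_zero12] at act
  simp only [left_vA, left_vB, PreVB.sub_self, PreVB.π_zero] at shift
  have hsub := DVB.core_sub hv hu'
  simp only [left_vA, left_vB] at hsub
  rw [act, shift, hsub]

lemma ultrawarp_LR_sub13 (YS : RLLinSec T) (m : M) {wl u2 : E} {wr : E13}
    (hwl : T.left.CoreAt (YS.y m) wl) (hwr : T.right.CoreAt m wr) (hu2 : T.UltracoreAt m u2)
    (h : T.up.vB.sub wl (YS.y13 wr) = T.up.vA.add (T.zE2 (YS.y m)) u2) :
    T.up.vA.π wl = wr ∧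
      T.up.vA.sub (YS.y13 wr) wl = T.up.vB.add (T.up.vA.zero wr) (T.up.vB.neg u2) := by
  obtain ⟨-, hwl2⟩ := hwl
  obtain ⟨-, hwr2⟩ := hwr
  obtain ⟨-, hu2₁₃, hu2₂₃⟩ := hu2
  simp only [left_bB, left_vB, right_bA, front_bA, right_doubleZero, front_doubleZero] at *
  rw [zE2, T.zero_coh_E2] at h
  have hC : T.up.vB.π wl = T.up.vB.π (YS.y13 wr) := by simp [hwl2, hwr2]
  have hwl13 : T.up.vA.π wl = wr := by
    simpa using T.up.πA_eq_of_subB_eq hC (by simp [hu2₁₃]) h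
  have hneg : T.up.vB.sub (YS.y13 wr) wl = T.up.vB.neg (T.up.vB.sub wl (YS.y13 wr)) :=
    congrArg Subtype.val (neg_sub (⟨wl, hC⟩ : T.up.vB.Fiber _) ⟨YS.y13 wr, rfl⟩).symm
  rw [h, T.up.negB_addA (by simp [hu2₁₃]), PreVB.neg_zero] at hneg
  have flip := T.up.subA_eq_of_subB_eq (m := T.right.bB.zero m) (c := T.up.vB.neg u2)
    (by simp [hwl13]) hC.symm (by simp [hwr2]) ⟨by simp [hu2₁₃], by simp [hu2₂₃]⟩
    (by simpa [hwr2] using hneg)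
  exact ⟨hwl13, by simpa using flip⟩

lemma ultrawarp_UD_sub12 (ZS : DULinSec T) (m : M) {wu u3 : E} {wd : E12}
    (hwu : T.up.CoreAt (ZS.z m) wu) (hwd : T.down.CoreAt m wd) (hu3 : T.UltracoreAt m u3)
    (h : T.up.vB.sub wu (ZS.z12 wd) = T.back.vA.add (T.zE3 (ZS.z m)) u3) :
    T.back.vA.π wu = wd ∧
      T.back.vA.sub wu (ZS.z12 wd) = T.up.vB.add (T.back.vA.zero wd) u3 := by
  obtain ⟨-, hwu2⟩ := hwu
  obtain ⟨-, hwd2⟩ := hwd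
  obtain ⟨hu3₁₂, -, hu3₂₃⟩ := hu3
  simp only [up_bB, front_bA, front_doubleZero] at *
  rw [zE3, T.zero_coh_E3] at h
  have hC : T.up.vB.π wu = T.up.vB.π (ZS.z12 wd) := by simp [hwu2, hwd2]
  have hC' : T.left.vB.π wu = T.left.vB.π (ZS.z12 wd) := by simpa only [left_vB] using hC
  have hwu12 : T.back.vA.π wu = wd := by
    simpa using T.left.πA_eq_of_subB_eq (c := u3) (b := T.front.vB.zero (ZS.z m)) hC'
      (by simp [hu3₁₂, T.down.double_zero]) (by simpa using h)
  have flip := T.left.subA_eq_of_subB_eq (m := T.down.bB.zero m) (d := wu) (d' := ZS.z12 wd)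
    (c := u3) (by simp [hwu12]) hC' (by simp [hwu2])
    ⟨by simp [hu3₁₂, T.down.double_zero], by simp [hu3₂₃, front_doubleZero]⟩
    (by simpa [hwu2] using h)
  exact ⟨hwu12, by simpa [hwu12] using flip⟩

section Grid

variable (XS : FBLinSec T) (YS : RLLinSec T) (ZS : DULinSec T) (m : M)

/-- `P₅ -₁₂ P₂` computed through `P₁` (left) and through `P₆, P₄` (right), from the warps along
the six edges of the hexagon. -/
lemma hexagon_two_ways {wb wl wu : E} {wf : E23} {wr : E13} {wd : E12}
    (D1 : T.back.vA.sub (ZS.z12 (YS.y1 (XS.x m))) (YS.y13 (ZS.z1 (XS.x m))) =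
      T.up.vA.add (T.back.vA.zero (YS.y1 (XS.x m))) wb)
    (D2 : T.back.vA.sub (XS.x23 (ZS.z2 (YS.y m))) (ZS.z12 (XS.x2 (YS.y m))) =
      T.up.vB.add (T.back.vA.zero (XS.x2 (YS.y m))) wl)
    (D3 : T.up.vA.sub (YS.y13 (XS.x3 (ZS.z m))) (XS.x23 (YS.y3 (ZS.z m))) =
      T.up.vB.add (T.up.vA.zero (XS.x3 (ZS.z m))) wu)
    (D4 : T.back.vA.sub (YS.y13 (XS.x3 (ZS.z m))) (YS.y13 (ZS.z1 (XS.x m))) =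
      T.up.vB.add (T.back.vA.zero (YS.y1 (XS.x m))) (YS.y13 wr))
    (D5 : T.back.vA.sub (XS.x23 (ZS.z2 (YS.y m))) (XS.x23 (YS.y3 (ZS.z m))) =
      T.up.vA.add (T.back.vA.zero (XS.x2 (YS.y m))) (XS.x23 wf))
    (D6 : T.up.vA.sub (ZS.z12 (YS.y1 (XS.x m))) (ZS.z12 (XS.x2 (YS.y m))) =
      T.up.vB.add (T.up.vA.zero (ZS.z1 (XS.x m))) (ZS.z12 wd)) :
    T.back.vA.sub (T.up.vB.add (T.back.vA.zero (YS.y1 (XS.x m))) (YS.y13 wr))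
        (T.up.vA.add (T.back.vA.zero (YS.y1 (XS.x m))) wb) =
      T.up.vA.add
        (T.back.vA.sub (T.up.vB.add (T.up.vA.zero (XS.x3 (ZS.z m))) wu)
          (T.up.vB.add (T.up.vA.zero (ZS.z1 (XS.x m))) (ZS.z12 wd)))
        (T.back.vA.sub (T.up.vB.add (T.back.vA.zero (XS.x2 (YS.y m))) wl)
          (T.up.vA.add (T.back.vA.zero (XS.x2 (YS.y m))) (XS.x23 wf))) := by
  have via_P1 := T.back.vA.sub_sub_sub_cancel_right
    (p := YS.y13 (XS.x3 (ZS.z m))) (q := ZS.z12 (YS.y1 (XS.x m)))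
    (r := YS.y13 (ZS.z1 (XS.x m))) (by simp) (by simp)
  have via_P6_P4 := T.back.subA_eq_addB_subA
    (d₁ := YS.y13 (XS.x3 (ZS.z m))) (d₂ := ZS.z12 (YS.y1 (XS.x m)))
    (d₃ := XS.x23 (YS.y3 (ZS.z m))) (d₄ := ZS.z12 (XS.x2 (YS.y m)))
    (by simp) (by simp) (by simp) (by simp)
  have via_P3 := T.back.vA.sub_sub_sub_cancel_left
    (p := ZS.z12 (XS.x2 (YS.y m))) (q := XS.x23 (YS.y3 (ZS.z m)))
    (r := XS.x23 (ZS.z2 (YS.y m))) (by simp) (by simp)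
  simp only [back_vB] at via_P6_P4
  rw [D4, D1] at via_P1
  rw [D3, D6, ← via_P3, D2, D5] at via_P6_P4
  rw [via_P1, via_P6_P4]

/-- `hexagon_two_ways` with the common `+₁₃`-summand cancelled and both sides split by the
interchange laws, so that the ultrawarps can be substituted. -/
lemma hexagon_identity {wb wl wu : E} {wf : E23} {wr : E13} {wd : E12}
    (hwb : T.back.CoreAt (XS.x m) wb) (hwl : T.left.CoreAt (YS.y m) wl)
    (hwu : T.up.CoreAt (ZS.z m) wu) (hwf : T.front.CoreAt m wf) (hwr : T.right.CoreAt m wr)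
    (hwd : T.down.CoreAt m wd) (hwl13 : T.up.vA.π wl = wr) (hwu12 : T.back.vA.π wu = wd)
    (hB : T.back.vA.sub (ZS.z12 (YS.y1 (XS.x m))) (YS.y13 (ZS.z1 (XS.x m))) =
      T.back.vB.add (T.back.vA.zero (YS.y1 (XS.x m))) wb)
    (hL : T.left.vA.sub (XS.x23 (ZS.z2 (YS.y m))) (ZS.z12 (XS.x2 (YS.y m))) =
      T.left.vB.add (T.left.vA.zero (XS.x2 (YS.y m))) wl)
    (hU : T.up.vA.sub (YS.y13 (XS.x3 (ZS.z m))) (XS.x23 (YS.y3 (ZS.z m))) =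
      T.up.vB.add (T.up.vA.zero (XS.x3 (ZS.z m))) wu)
    (hF : T.front.vA.sub (ZS.z2 (YS.y m)) (YS.y3 (ZS.z m)) =
      T.front.vB.add (T.front.vA.zero (YS.y m)) wf)
    (hR : T.right.vA.sub (XS.x3 (ZS.z m)) (ZS.z1 (XS.x m)) =
      T.right.vB.add (T.right.vA.zero (XS.x m)) wr)
    (hD : T.down.vA.sub (YS.y1 (XS.x m)) (XS.x2 (YS.y m)) =
      T.down.vB.add (T.down.vA.zero (XS.x m)) wd) :
    T.back.vA.sub
        (T.up.vB.add (T.back.vA.zero (T.down.vB.add (T.down.vA.zero (XS.x m)) wd))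
          (T.up.vA.sub (YS.y13 wr) wl))
        (T.up.vA.add (T.back.vA.zero (T.down.vB.add (T.down.vA.zero (XS.x m)) wd))
          (T.up.vA.sub wb (XS.x23 wf))) =
      T.up.vB.add (T.up.vA.zero (T.right.vB.add (T.right.vA.zero (XS.x m)) wr))
        (T.back.vA.sub wu (ZS.z12 wd)) := by
  obtain ⟨hwb1, hwb2⟩ := hwb
  obtain ⟨hwl1, hwl2⟩ := hwl
  obtain ⟨hwu1, hwu2⟩ := hwu
  obtain ⟨hwf1, hwf2⟩ := hwf
  obtain ⟨hwr1, hwr2⟩ := hwr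
  obtain ⟨hwd1, hwd2⟩ := hwd
  simp only [back_bA, back_bB, left_bA, left_bB, up_bA, up_bB, right_bA, front_bA, front_bB,
    back_vB, left_vA, left_vB] at *
  have D4 := PreVB.map_warp YS.map_add1 YS.map_smul1 YS.map_add3 (d := XS.x3 (ZS.z m))
    (d' := ZS.z1 (XS.x m)) (w := wr) (by simp) (by simp [hwr2]) (by simpa using hR)
  have D5 := PreVB.map_warp XS.map_add2 XS.map_smul2 XS.map_add3 (d := ZS.z2 (YS.y m))
    (d' := YS.y3 (ZS.z m)) (w := wf) (by simp) (by simp [hwf2]) (by simpa using hF)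
  have D6 := PreVB.map_warp ZS.map_add1 ZS.map_smul1 ZS.map_add2 (d := YS.y1 (XS.x m))
    (d' := XS.x2 (YS.y m)) (w := wd) (by simp) (by simp [hwd2]) (by simpa using hD)
  simp only [RLLinSec.over12, DULinSec.sec1, FBLinSec.over12, RLLinSec.over3, front_bB,
    DULinSec.secz, DULinSec.over13, FBLinSec.over2, RLLinSec.secy] at D4 D5 D6
  have square := T.back.subA_eq_addB_subA
    (d₁ := T.up.vB.add (T.back.vA.zero (YS.y1 (XS.x m))) (YS.y13 wr))
    (d₂ := T.up.vA.add (T.back.vA.zero (YS.y1 (XS.x m))) wb)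
    (d₃ := T.up.vB.add (T.back.vA.zero (XS.x2 (YS.y m))) wl)
    (d₄ := T.up.vA.add (T.back.vA.zero (XS.x2 (YS.y m))) (XS.x23 wf))
    (by simp [*]) (by simp [*]) (by simp [*]) (by simp [*])
  simp only [back_vB] at square
  have two := hexagon_two_ways XS YS ZS m hB hL hU D4 D5 D6
  rw [square] at two
  have key := T.up.vA.add_right_cancel (by simp (maxDischargeDepth := 5) [*])
    (by simp (maxDischargeDepth := 5) [*]) two
  rw [← hD, ← hR, ← sub13_add23_zero12 (by simp) (by simp [*]) (by simp [*]) (by simp [*]),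
    ← sub13_add13_zero12 (by simp) (by simp [*]) (by simp [*]), key,
    sub12_add23_zero13 (by simp) (by simp [*]) (by simp [*]) (by simp [*])]

end Grid

lemma ultrawarp_sum {m : M} {x : E1} (hx : T.down.bA.π x = m) {wd : E12} {wr : E13}
    (hwd : T.down.CoreAt m wd) (hwr : T.right.CoreAt m wr) {u1 u2 u3 : E}
    (hu1 : T.UltracoreAt m u1) (hu2 : T.UltracoreAt m u2) (hu3 : T.UltracoreAt m u3)
    (h : T.back.vA.sub
        (T.up.vB.add (T.back.vA.zero (T.down.vB.add (T.down.vA.zero x) wd))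
          (T.up.vB.add (T.up.vA.zero wr) (T.up.vB.neg u2)))
        (T.up.vA.add (T.back.vA.zero (T.down.vB.add (T.down.vA.zero x) wd))
          (T.up.vB.add (T.zE1 x) u1)) =
      T.up.vB.add (T.up.vA.zero (T.right.vB.add (T.right.vA.zero x) wr))
        (T.up.vB.add (T.back.vA.zero wd) u3)) :
    T.up.vB.add u1 (T.up.vB.add u2 u3) = T.tripleZero m := by
  obtain ⟨hwd1, hwd2⟩ := hwd
  obtain ⟨hwr1, hwr2⟩ := hwr
  have hu1₂₃ := hu1.2.2
  have hu2₂₃ := hu2.2.2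
  have hu3₂₃ := hu3.2.2
  simp only [right_bA, front_bA, front_doubleZero] at hwr1 hu1₂₃ hu2₂₃ hu3₂₃
  have hV2 : T.left.CoreAt (T.down.bB.zero m) (T.up.vB.add (T.up.vA.zero wr) (T.up.vB.neg u2)) := by
    constructor <;> simp [hwr1, hwr2, hu2.1, hu2₂₃, T.down.double_zero, front_doubleZero]
  rw [show T.zE1 x = T.zE1 (T.down.vA.π (T.down.vB.add (T.down.vA.zero x) wd)) by
    simp [hx, hwd1, hwd2], sub12_add23_add13_zero12 (by simp [hx, hwd2]) hV2 hu1] at h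
  have split_X : T.back.vA.zero (T.down.vB.add (T.down.vA.zero x) wd) =
      T.up.vB.add (T.up.vA.zero (T.right.vA.zero x)) (T.back.vA.zero wd) := by
    simpa [T.zero_coh_E1] using T.left.zeroA_add (T.down.vA.zero x) wd (by simp [hx, hwd2])
  have split_rr : T.up.vA.zero (T.right.vB.add (T.right.vA.zero x) wr) =
      T.up.vB.add (T.up.vA.zero (T.right.vA.zero x)) (T.up.vA.zero wr) := by
    simpa using T.up.zeroA_add (T.right.vA.zero x) wr (by simp [hx, hwr2])
  rw [split_X, split_rr] at h
  let F := T.up.vB.Fiber (T.front.vB.zero (T.right.bB.zero m))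
  let z : F := ⟨T.up.vA.zero (T.right.vA.zero x), by simp [hx]⟩
  let a : F := ⟨T.back.vA.zero wd, by simp [hwd2, front_doubleZero]⟩
  let b : F := ⟨T.up.vA.zero wr, by simp [hwr2]⟩
  let v₁ : F := ⟨u1, hu1₂₃⟩
  let v₂ : F := ⟨u2, hu2₂₃⟩
  let v₃ : F := ⟨u3, hu3₂₃⟩
  have key : z + a + (b + -v₂ - v₁) = z + b + (a + v₃) := Subtype.ext h
  have sum : v₁ + (v₂ + v₃) = 0 := by
    rw [show v₁ + (v₂ + v₃) = z + b + (a + v₃) - (z + a + (b + -v₂ - v₁)) by abel, key, sub_self]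
  simp only [tripleZero, front_bA, front_doubleZero]
  exact congrArg Subtype.val sum

end TVB

/-- **Warp theorem.**  Let `E` be a triple vector bundle with a
grid consisting of a front-back linear double section `(X_{2,3}; X_2, X_3; X)`,
a right-left one `(Y_{1,3}; Y_1, Y_3; Y)` and a down-up one
`(Z_{1,2}; Z_1, Z_2; Z)`.  Let `warp_up, …, warp_right` be the warps of the six
faces and `u₁ = uwarp_{B-F}`, `u₂ = uwarp_{L-R}`, `u₃ = uwarp_{U-D}` the three
ultrawarps (warps of the grids induced on the three core double vector
bundles, with the orientation conventions of the paper).  Then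
`uwarp_{B-F} + uwarp_{L-R} + uwarp_{U-D} = 0`. -/
theorem tvb_warp_theorem {E E12 E13 E23 E1 E2 E3 M : Type*}
    (T : TVB E E12 E13 E23 E1 E2 E3 M)
    (XS : FBLinSec T) (YS : RLLinSec T) (ZS : DULinSec T)
    (wup : E3 → E) (wdown : M → E12) (wback : E1 → E) (wfront : M → E23)
    (wleft : E2 → E) (wright : M → E13) (u1 u2 u3 : M → E)
    -- warp of the Up face: Y₁₃(X₃(e₃)) -₁,₃ X₂₃(Y₃(e₃)) = 0̂_{X₃(e₃)} +₂,₃ warp_up(e₃)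
    (hwup : ∀ e3 : E3,
      (T.up.vA.π (wup e3) = T.up.bA.zero e3 ∧ T.up.vB.π (wup e3) = T.up.bB.zero e3) ∧
      T.up.vA.sub (YS.y13 (XS.x3 e3)) (XS.x23 (YS.y3 e3)) =
        T.up.vB.add (T.up.vA.zero (XS.x3 e3)) (wup e3))
    -- warp of the Down face
    (hwdown : ∀ m : M,
      (T.down.vA.π (wdown m) = T.down.bA.zero m ∧ T.down.vB.π (wdown m) = T.down.bB.zero m) ∧
      T.down.vA.sub (YS.y1 (XS.x m)) (XS.x2 (YS.y m)) =
        T.down.vB.add (T.down.vA.zero (XS.x m)) (wdown m))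
    -- warp of the Back face: Z₁₂(Y₁(e₁)) -₁,₂ Y₁₃(Z₁(e₁)) = 0̂_{Y₁(e₁)} +₁,₃ warp_back(e₁)
    (hwback : ∀ e1 : E1,
      (T.back.vA.π (wback e1) = T.back.bA.zero e1 ∧ T.back.vB.π (wback e1) = T.back.bB.zero e1) ∧
      T.back.vA.sub (ZS.z12 (YS.y1 e1)) (YS.y13 (ZS.z1 e1)) =
        T.back.vB.add (T.back.vA.zero (YS.y1 e1)) (wback e1))
    -- warp of the Front face
    (hwfront : ∀ m : M,
      (T.front.vA.π (wfront m) = T.front.bA.zero m ∧ T.front.vB.π (wfront m) = T.front.bB.zero m) ∧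
      T.front.vA.sub (ZS.z2 (YS.y m)) (YS.y3 (ZS.z m)) =
        T.front.vB.add (T.front.vA.zero (YS.y m)) (wfront m))
    -- warp of the Left face: X₂₃(Z₂(e₂)) -₁,₂ Z₁₂(X₂(e₂)) = 0̂_{X₂(e₂)} +₂,₃ warp_left(e₂)
    (hwleft : ∀ e2 : E2,
      (T.left.vA.π (wleft e2) = T.left.bA.zero e2 ∧ T.left.vB.π (wleft e2) = T.left.bB.zero e2) ∧
      T.left.vA.sub (XS.x23 (ZS.z2 e2)) (ZS.z12 (XS.x2 e2)) =
        T.left.vB.add (T.left.vA.zero (XS.x2 e2)) (wleft e2))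
    -- warp of the Right face
    (hwright : ∀ m : M,
      (T.right.vA.π (wright m) = T.right.bA.zero m ∧ T.right.vB.π (wright m) = T.right.bB.zero m) ∧
      T.right.vA.sub (XS.x3 (ZS.z m)) (ZS.z1 (XS.x m)) =
        T.right.vB.add (T.right.vA.zero (XS.x m)) (wright m))
    -- ultrawarp of the (B-F) core double vector bundle:
    -- warp_back(X(m)) -₁,₃ X₂₃(warp_front(m)) = 0̂_{X(m)} +₂,₃ u₁(m)
    (hu1 : ∀ m : M, T.UltracoreAt m (u1 m) ∧
      T.up.vA.sub (wback (XS.x m)) (XS.x23 (wfront m)) =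
        T.up.vB.add (T.zE1 (XS.x m)) (u1 m))
    -- ultrawarp of the (L-R) core double vector bundle:
    -- warp_left(Y(m)) -₂,₃ Y₁₃(warp_right(m)) = 0̂_{Y(m)} +₁,₃ u₂(m)
    (hu2 : ∀ m : M, T.UltracoreAt m (u2 m) ∧
      T.up.vB.sub (wleft (YS.y m)) (YS.y13 (wright m)) =
        T.up.vA.add (T.zE2 (YS.y m)) (u2 m))
    -- ultrawarp of the (U-D) core double vector bundle:
    -- warp_up(Z(m)) -₂,₃ Z₁₂(warp_down(m)) = 0̂_{Z(m)} +₁,₂ u₃(m)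
    (hu3 : ∀ m : M, T.UltracoreAt m (u3 m) ∧
      T.up.vB.sub (wup (ZS.z m)) (ZS.z12 (wdown m)) =
        T.back.vA.add (T.zE3 (ZS.z m)) (u3 m)) :
    ∀ m : M,
      T.up.vB.add (u1 m) (T.up.vB.add (u2 m) (u3 m)) = T.tripleZero m := by
  intro m
  obtain ⟨hwl13, hLR⟩ :=
    TVB.ultrawarp_LR_sub13 YS m (hwleft _).1 (hwright m).1 (hu2 m).1 (hu2 m).2
  obtain ⟨hwu12, hUD⟩ :=
    TVB.ultrawarp_UD_sub12 ZS m (hwup _).1 (hwdown m).1 (hu3 m).1 (hu3 m).2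
  have hex := TVB.hexagon_identity XS YS ZS m (hwback _).1 (hwleft _).1 (hwup _).1 (hwfront m).1
    (hwright m).1 (hwdown m).1 hwl13 hwu12 (hwback _).2 (hwleft _).2 (hwup _).2 (hwfront m).2
    (hwright m).2 (hwdown m).2
  rw [(hu1 m).2, hLR, hUD] at hex
  exact TVB.ultrawarp_sum (XS.secx m) (hwdown m).1 (hwright m).1 (hu1 m).1 (hu2 m).1 (hu3 m).1 hex
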